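/- arXiv:2108.10756 — 2 statements merged into one kernel-verified Lean document; each statement's English description precedes it below -/
import Mathlib

section
/- For every nonnegative integer m, Σ_{n=0}^{m} n! · 𝓗_n · S₂(m,n) = Σ_{n=0}^{m} ((n+1)!/2^{n+2}) · y(n,1/2) · S₂(m,n+1). -/
/-- The numbers `y(n,λ)` from the paper:
`y(n,λ) = ∑_{j=0}^{n} (-1)^n / ((j+1) · λ^{j+1} · (λ-1)^{n+1-j})`. -/
noncomputable def ynum (n : ℕ) (l : ℝ) : ℝ :=
  ∑ j ∈ Finset.range (n + 1),
    (-1 : ℝ) ^ n / ((j + 1) * l ^ (j + 1) * (l - 1) ^ (n + 1 - j))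

/-- The alternating harmonic numbers `𝓗_n = ∑_{j=1}^{n} (-1)^j/j` (with `𝓗_0 = 0`). -/
noncomputable def altHarm (n : ℕ) : ℝ :=
  ∑ j ∈ Finset.range n, (-1 : ℝ) ^ (j + 1) / ((j : ℝ) + 1)

/-- The Stirling numbers of the second kind,
`S₂(n,k) = (1/k!)·∑_{c=0}^{k} (-1)^{k-c}·C(k,c)·c^n`. -/
def S2 (n k : ℕ) : ℚ :=
  (1 / (k.factorial : ℚ)) *
    ∑ c ∈ Finset.range (k + 1), (-1 : ℚ) ^ (k - c) * (k.choose c : ℚ) * (c : ℚ) ^ n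

/-! At `λ = 1/2` the `j`-th term of `y(n,λ)` collapses to `2^(n+2) (-1)^(j+1)/(j+1)`, so
`y(n,1/2) = 2^(n+2) 𝓗_{n+1}` and the right-hand side is the left-hand side reindexed by
`n ↦ n+1`. The two boundary terms vanish: `𝓗_0 = 0`, and `S₂(m,m+1) = 0` because it is an
`(m+1)`-st forward difference of `x ↦ x^m`. -/

open Finset fwdDiff

lemma S2_eq_fwdDiff_iter_pow (m k : ℕ) :
    S2 m k = Δ_[1] ^[k] (fun r : ℚ ↦ r ^ m) 0 / k.factorial := by
  rw [S2, fwdDiff_iter_eq_sum_shift, one_div_mul_eq_div]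
  congr 1
  exact sum_congr rfl fun c _ ↦ by simp

lemma S2_eq_zero_of_lt {m k : ℕ} (h : m < k) : S2 m k = 0 := by
  rw [S2_eq_fwdDiff_iter_pow, fwdDiff_iter_pow_eq_zero_of_lt h, Pi.zero_apply, zero_div]

lemma ynum_one_half (n : ℕ) : ynum n (1 / 2) = 2 ^ (n + 2) * altHarm (n + 1) := by
  rw [ynum, altHarm, mul_sum]
  refine sum_congr rfl fun j hj ↦ ?_
  obtain ⟨k, rfl⟩ := Nat.exists_eq_add_of_le (Nat.lt_succ_iff.mp (mem_range.mp hj))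
  rw [show j + k + 1 - j = k + 1 by omega, show (1 / 2 : ℝ) - 1 = -1 / 2 by norm_num,
    div_pow, div_pow, one_pow]
  field_simp
  ring

lemma sum_range_succ_shift_of_eq_zero {M : Type*} [AddCommMonoid M] (f : ℕ → M) (m : ℕ)
    (h₀ : f 0 = 0) (hm : f (m + 1) = 0) :
    ∑ n ∈ range (m + 1), f (n + 1) = ∑ n ∈ range (m + 1), f n := by
  rw [← add_zero (∑ n ∈ range (m + 1), f n), ← hm, ← sum_range_succ (n := m + 1),
    sum_range_succ' f (m + 1), h₀, add_zero]

theorem stmt_15 (m : ℕ) :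
    ∑ n ∈ Finset.range (m + 1), (n.factorial : ℝ) * altHarm n * (S2 m n : ℝ) =
      ∑ n ∈ Finset.range (m + 1),
        (((n + 1).factorial : ℝ) / 2 ^ (n + 2)) * ynum n (1 / 2) * (S2 m (n + 1) : ℝ) := by
  rw [← sum_range_succ_shift_of_eq_zero (fun n ↦ (n.factorial : ℝ) * altHarm n * S2 m n) m
    (by simp [altHarm]) (by simp [S2_eq_zero_of_lt])]
  refine sum_congr rfl fun n _ ↦ ?_
  rw [ynum_one_half]
  field_simp
end

section
/- For every integer n ≥ 1, y(n-1,2) + y(n,2) = (1/2) · Σ_{j=0}^{n} E_j · S₁(n,j) / (n+1)!. -/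
/-- The signed Stirling numbers of the first kind, defined by the recurrence
`S₁(n+1,k) = S₁(n,k-1) - n·S₁(n,k)`, equivalently by
`∑_{k=0}^{n} S₁(n,k)·x^k = x·(x-1)···(x-n+1)`. -/
def S1 : ℕ → ℕ → ℤ
  | 0, 0 => 1
  | 0, _ + 1 => 0
  | n + 1, 0 => -(n : ℤ) * S1 n 0
  | n + 1, k + 1 => S1 n k - (n : ℤ) * S1 n (k + 1)

/-- The Euler numbers `E_n = E_n(0) = 2·(1-2^{n+1})·B_{n+1}/(n+1)`, where the `B_n`
are the Bernoulli numbers with `B_1 = -1/2`. -/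
def eulerNum (n : ℕ) : ℚ :=
  2 * (1 - 2 ^ (n + 1)) * bernoulli (n + 1) / ((n : ℚ) + 1)

open Nat

section PowerSeries

open PowerSeries

theorem PowerSeries.coeff_mk_div_factorial_mul_exp (a : ℕ → ℚ) (n : ℕ) :
    coeff n (mk (fun k => a k / k !) * exp ℚ) =
      (∑ k ∈ Finset.range (n + 1), n.choose k * a k) / n ! := by
  rw [coeff_mul, Finset.Nat.sum_antidiagonal_eq_sum_range_succ_mk, Finset.sum_div]
  refine Finset.sum_congr rfl fun k hk => ?_
  rw [Nat.cast_choose ℚ (Finset.mem_range_succ_iff.mp hk)]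
  simp only [coeff_mk, coeff_exp, Algebra.algebraMap_self, one_div, map_inv₀, map_natCast]
  field_simp

noncomputable def eulerNumPowerSeries : ℚ⟦X⟧ := mk fun n => eulerNum n / n !

theorem X_mul_eulerNumPowerSeries :
    X * eulerNumPowerSeries =
      2 * (bernoulliPowerSeries ℚ - rescale 2 (bernoulliPowerSeries ℚ)) := by
  rw [← map_ofNat C 2]
  ext (_ | n) <;> rw [coeff_C_mul, map_sub, coeff_rescale]
  · simp
  · simp only [coeff_succ_X_mul, eulerNumPowerSeries, bernoulliPowerSeries, coeff_mk, eulerNum,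
      factorial_succ, Algebra.algebraMap_self, RingHom.id_apply]
    push_cast
    field_simp

theorem eulerNumPowerSeries_mul_exp_add_one : eulerNumPowerSeries * (exp ℚ + 1) = 2 := by
  set B := bernoulliPowerSeries ℚ
  have hB : B * (exp ℚ - 1) = X := bernoulliPowerSeries_mul_exp_sub_one ℚ
  have hB2 : rescale 2 B * (exp ℚ ^ 2 - 1) = 2 * X := by
    have := congrArg (rescale (2 : ℚ)) hB
    rwa [map_mul, map_sub, map_one, rescale_X, ← Nat.cast_ofNat, ← exp_pow_eq_rescale_exp,
      map_natCast] at this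
  have hE : exp ℚ - 1 ≠ 0 := fun h => by simpa using congrArg (coeff 1) h
  refine mul_left_cancel₀ (mul_ne_zero X_ne_zero hE) ?_
  linear_combination
    (exp ℚ ^ 2 - 1) * X_mul_eulerNumPowerSeries + 2 * (exp ℚ + 1) * hB - 2 * hB2

theorem sum_choose_mul_eulerNum_add_eulerNum (m : ℕ) :
    ∑ k ∈ Finset.range (m + 1), m.choose k * eulerNum k + eulerNum m = if m = 0 then 2 else 0 := by
  have h := congrArg (coeff m) eulerNumPowerSeries_mul_exp_add_one
  rw [mul_add, mul_one, map_add, eulerNumPowerSeries, coeff_mk_div_factorial_mul_exp, coeff_mk,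
    ← map_ofNat C 2, coeff_C] at h
  have : (m ! : ℚ) ≠ 0 := by positivity
  field_simp at h
  split_ifs at h ⊢ with hm <;> simp_all

end PowerSeries

section Polynomial

open Polynomial

theorem descPochhammer_succ_comp_X_add_one (R : Type*) [CommRing R] (n : ℕ) :
    (descPochhammer R (n + 1)).comp (X + 1) =
      descPochhammer R (n + 1) + (n + 1 : R[X]) * descPochhammer R n := by
  nth_rw 1 [descPochhammer_succ_left]
  rw [descPochhammer_succ_right, mul_comp, X_comp, comp_assoc, sub_comp, X_comp, one_comp,
    add_sub_cancel_right, comp_X]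
  ring

theorem coeff_descPochhammer_int (n k : ℕ) : (descPochhammer ℤ n).coeff k = S1 n k := by
  induction n generalizing k with
  | zero => cases k <;> simp [S1, coeff_one]
  | succ n ih =>
    rw [descPochhammer_succ_right, ← C_eq_natCast]
    cases k with
    | zero => simp [S1, ih, mul_comm]
    | succ k => rw [coeff_mul_X_sub_C, ih, ih, S1]; ring

noncomputable def eulerNumFunctional : ℚ[X] →ₗ[ℚ] ℚ :=
  lsum fun k => LinearMap.mulRight ℚ (eulerNum k)

theorem eulerNumFunctional_eq_sum_range {p : ℚ[X]} {n : ℕ} (hp : p.natDegree ≤ n) :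
    eulerNumFunctional p = ∑ k ∈ Finset.range (n + 1), p.coeff k * eulerNum k := by
  rw [eulerNumFunctional, lsum_apply,
    sum_over_range' _ (fun _ => map_zero _) _ (Nat.lt_succ_of_le hp)]
  rfl

theorem eulerNumFunctional_monomial (k : ℕ) (c : ℚ) :
    eulerNumFunctional (monomial k c) = c * eulerNum k :=
  sum_monomial_index c _ (map_zero _)

theorem eulerNumFunctional_taylor_one_add (p : ℚ[X]) :
    eulerNumFunctional (taylor 1 p) + eulerNumFunctional p = 2 * p.eval 0 := by
  suffices eulerNumFunctional ∘ₗ taylor 1 + eulerNumFunctional = 2 • leval 0 from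
    LinearMap.congr_fun this p
  ext m
  have hdeg : ((X + 1 : ℚ[X]) ^ m).natDegree ≤ m := by
    simpa using (natDegree_pow_X_add_C m (1 : ℚ)).le
  simp only [LinearMap.comp_apply, LinearMap.add_apply, LinearMap.smul_apply, taylor_monomial,
    map_one, one_mul, leval_apply, eval_monomial, eulerNumFunctional_monomial,
    eulerNumFunctional_eq_sum_range hdeg, coeff_X_add_one_pow,
    sum_choose_mul_eulerNum_add_eulerNum]
  cases m <;> simp

theorem eulerNumFunctional_descPochhammer (n : ℕ) :
    eulerNumFunctional (descPochhammer ℚ n) = (-1 / 2) ^ n * n ! := by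
  induction n with
  | zero =>
    have h := eulerNumFunctional_taylor_one_add 1
    rw [taylor_one, C_1, eval_one] at h
    simp only [descPochhammer_zero, pow_zero, factorial_zero, cast_one, mul_one]
    linarith
  | succ n ih =>
    have h := eulerNumFunctional_taylor_one_add (descPochhammer ℚ (n + 1))
    have hC : (n + 1 : ℚ[X]) = C ((n : ℚ) + 1) := by simp
    rw [taylor_apply, map_one, descPochhammer_succ_comp_X_add_one, hC, C_mul', map_add, map_smul,
      descPochhammer_ne_zero_eval_zero _ n.succ_ne_zero, ih] at h
    rw [factorial_succ]
    push_cast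
    linear_combination h / 2

theorem sum_eulerNum_mul_S1 (n : ℕ) :
    ∑ j ∈ Finset.range (n + 1), eulerNum j * S1 n j = (-1 / 2) ^ n * n ! := by
  rw [← eulerNumFunctional_descPochhammer,
    eulerNumFunctional_eq_sum_range (descPochhammer_natDegree ℚ n).le]
  refine Finset.sum_congr rfl fun j _ => ?_
  rw [← descPochhammer_map (Int.castRingHom ℚ), coeff_map, coeff_descPochhammer_int, eq_intCast,
    mul_comm]

end Polynomial

theorem ynum_two (N : ℕ) :
    ynum N 2 = (-1) ^ N * ∑ j ∈ Finset.range (N + 1), 1 / (((j : ℝ) + 1) * 2 ^ (j + 1)) := by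
  rw [ynum, Finset.mul_sum]
  refine Finset.sum_congr rfl fun j _ => ?_
  norm_num [div_eq_mul_inv]

theorem ynum_two_add_ynum_two_succ (m : ℕ) :
    ynum m 2 + ynum (m + 1) 2 = (-1) ^ (m + 1) / (((m : ℝ) + 2) * 2 ^ (m + 2)) := by
  rw [ynum_two, ynum_two, Finset.sum_range_succ _ (m + 1), pow_succ]
  push_cast
  ring

theorem stmt_17 (n : ℕ) (hn : 1 ≤ n) :
    ynum (n - 1) 2 + ynum n 2 =
      (1 / 2) * ∑ j ∈ Finset.range (n + 1),
        (eulerNum j : ℝ) * (S1 n j : ℝ) / ((n + 1).factorial : ℝ) := by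
  obtain ⟨m, rfl⟩ : ∃ m, n = m + 1 := ⟨n - 1, by omega⟩
  have h := congrArg (Rat.cast : ℚ → ℝ) (sum_eulerNum_mul_S1 (m + 1))
  push_cast at h
  rw [Nat.add_sub_cancel, ynum_two_add_ynum_two_succ, ← Finset.sum_div, h,
    Nat.factorial_succ (m + 1)]
  push_cast
  rw [div_pow]
  field_simp
  ring
end
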